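/- Let G be a finite graph and let r ≥ 2 be an integer. Let G' be the graph obtained from G as follows: replace each edge v_i v_j of G by a path of length 2r from v_i to v_j whose internal vertices are new and distinct for distinct edges; add a new vertex x adjacent to every vertex of V(G); and attach to x a new path of length r. Then γ_r(G') = τ(G) + 1, and for every minimum vertex cover C of G, the set C ∪ {x} is a minimum distance-r dominating set of G'. -/

import Mathlib

/-- `D` is a distance-`r` dominating set of `G`. -/
def IsDrDS {V : Type*} (G : SimpleGraph V) (r : ℕ) (D : Set V) : Prop :=
  ∀ v : V, ∃ u ∈ D, G.Reachable u v ∧ G.dist u v ≤ r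

/-- `γ_r(G)`: the minimum size of a distance-`r` dominating set of `G`. -/
noncomputable def gammaR {V : Type*} (G : SimpleGraph V) (r : ℕ) : ℕ :=
  sInf {n | ∃ D : Set V, IsDrDS G r D ∧ D.ncard = n}

/-- `C` is a vertex cover of `G`. -/
def IsVC {V : Type*} (G : SimpleGraph V) (C : Set V) : Prop :=
  ∀ u v : V, G.Adj u v → u ∈ C ∨ v ∈ C

/-- `τ(G)`: the minimum size of a vertex cover of `G`. -/
noncomputable def tau {V : Type*} (G : SimpleGraph V) : ℕ :=
  sInf {n | ∃ C : Set V, IsVC G C ∧ C.ncard = n}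

/-- Index type for the edges of `G`: each edge is recorded as its ordered pair
of endpoints `(u, v)` with `u < v`. -/
abbrev EdgeIdx {V : Type*} [LinearOrder V] (G : SimpleGraph V) : Type _ :=
  {p : V × V // G.Adj p.1 p.2 ∧ p.1 < p.2}

/-- Vertex type of the graph `G'` obtained from `G` by replacing every edge by a
path of length `2r`, adding a new vertex `x` adjacent to all of `V(G)`, and
attaching to `x` a new path of length `r`.  The new vertex `x` is
`Sum.inr (Sum.inr 0)`. -/
abbrev VPrime {V : Type*} [LinearOrder V] (G : SimpleGraph V) (r : ℕ) : Type _ :=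
  V ⊕ (EdgeIdx G × Fin (2 * r - 1)) ⊕ Fin (r + 1)

/-- The base (one-directional) adjacency relation of `G'`. -/
def relPrime {V : Type*} [LinearOrder V] (G : SimpleGraph V) (r : ℕ) :
    VPrime G r → VPrime G r → Prop := fun p q =>
  (∃ (e : EdgeIdx G) (i : Fin (2 * r - 1)), (i : ℕ) = 0 ∧
      p = Sum.inl e.1.1 ∧ q = Sum.inr (Sum.inl (e, i))) ∨
  (∃ (e : EdgeIdx G) (i j : Fin (2 * r - 1)), (j : ℕ) = (i : ℕ) + 1 ∧
      p = Sum.inr (Sum.inl (e, i)) ∧ q = Sum.inr (Sum.inl (e, j))) ∨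
  (∃ (e : EdgeIdx G) (i : Fin (2 * r - 1)), (i : ℕ) = 2 * r - 2 ∧
      p = Sum.inr (Sum.inl (e, i)) ∧ q = Sum.inl e.1.2) ∨
  (∃ w : V, p = Sum.inl w ∧ q = Sum.inr (Sum.inr (0 : Fin (r + 1)))) ∨
  (∃ k k' : Fin (r + 1), (k' : ℕ) = (k : ℕ) + 1 ∧
      p = Sum.inr (Sum.inr k) ∧ q = Sum.inr (Sum.inr k'))

/-- The graph `G'` of the construction. -/
def GPrime {V : Type*} [LinearOrder V] (G : SimpleGraph V) (r : ℕ) :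
    SimpleGraph (VPrime G r) :=
  SimpleGraph.fromRel (relPrime G r)

/-- The new vertex `x` of the construction. -/
def xVert {V : Type*} [LinearOrder V] (G : SimpleGraph V) (r : ℕ) : VPrime G r :=
  Sum.inr (Sum.inr (0 : Fin (r + 1)))

section Aux
open SimpleGraph Sum
set_option linter.unusedSectionVars false
set_option linter.unusedVariables false
variable {V : Type*} [Fintype V] [LinearOrder V] {G : SimpleGraph V} {r : ℕ}

lemma gp_adj_vx (w : V) (hr : 2 ≤ r) : (GPrime G r).Adj (inl w) (xVert G r) := by
  rw [GPrime, SimpleGraph.fromRel_adj]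
  exact ⟨by simp [xVert], Or.inl (Or.inr (Or.inr (Or.inr (Or.inl ⟨w, rfl, rfl⟩))))⟩

lemma gp_adj_pend (k : ℕ) (hk : k + 1 < r + 1) :
    (GPrime G r).Adj (inr (inr ⟨k, by omega⟩)) (inr (inr ⟨k + 1, hk⟩)) := by
  rw [GPrime, SimpleGraph.fromRel_adj]
  refine ⟨by simp [Fin.ext_iff], Or.inl ?_⟩
  exact Or.inr (Or.inr (Or.inr (Or.inr ⟨⟨k, by omega⟩, ⟨k+1, hk⟩, rfl, rfl, rfl⟩)))

lemma gp_adj_e0 (e : EdgeIdx G) (h : (0:ℕ) < 2 * r - 1) :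
    (GPrime G r).Adj (inl e.1.1) (inr (inl (e, ⟨0, h⟩))) := by
  rw [GPrime, SimpleGraph.fromRel_adj]
  exact ⟨by simp, Or.inl (Or.inl ⟨e, ⟨0, h⟩, rfl, rfl, rfl⟩)⟩

lemma gp_adj_path (e : EdgeIdx G) (i : ℕ) (h : i + 1 < 2 * r - 1) :
    (GPrime G r).Adj (inr (inl (e, ⟨i, by omega⟩))) (inr (inl (e, ⟨i + 1, h⟩))) := by
  rw [GPrime, SimpleGraph.fromRel_adj]
  refine ⟨by simp [Fin.ext_iff], Or.inl ?_⟩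
  exact Or.inr (Or.inl ⟨e, ⟨i, by omega⟩, ⟨i+1, h⟩, rfl, rfl, rfl⟩)

lemma gp_adj_elast (e : EdgeIdx G) (h : 2 * r - 2 < 2 * r - 1) :
    (GPrime G r).Adj (inr (inl (e, ⟨2 * r - 2, h⟩))) (inl e.1.2) := by
  rw [GPrime, SimpleGraph.fromRel_adj]
  exact ⟨by simp, Or.inl (Or.inr (Or.inr (Or.inl ⟨e, ⟨2 * r - 2, h⟩, rfl, rfl, rfl⟩)))⟩

lemma sub_eq (e : EdgeIdx G) {a b : ℕ} (h : a = b) (ha : a < 2 * r - 1) :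
    (inr (inl (e, ⟨a, ha⟩)) : VPrime G r) = inr (inl (e, ⟨b, h ▸ ha⟩)) := by subst h; rfl

lemma walk_x_pend (k : ℕ) (hk : k < r + 1) :
    ∃ w : (GPrime G r).Walk (xVert G r) (inr (inr ⟨k, hk⟩)), w.length = k := by
  induction k with
  | zero => exact ⟨(SimpleGraph.Walk.nil).copy rfl (by simp [xVert]), (SimpleGraph.Walk.length_copy _ _ _).trans rfl⟩
  | succ n ih =>
    obtain ⟨w, hw⟩ := ih (by omega)
    exact ⟨w.concat (gp_adj_pend n hk), by simp [SimpleGraph.Walk.length_concat, hw]⟩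

lemma walk_u_sub (e : EdgeIdx G) (i : ℕ) (hi : i < 2 * r - 1) :
    ∃ w : (GPrime G r).Walk (inl e.1.1) (inr (inl (e, ⟨i, hi⟩))), w.length = i + 1 := by
  induction i with
  | zero => exact ⟨SimpleGraph.Walk.cons (gp_adj_e0 e hi) SimpleGraph.Walk.nil, by simp⟩
  | succ n ih =>
    obtain ⟨w, hw⟩ := ih (by omega)
    exact ⟨w.concat (gp_adj_path e n hi), by simp [SimpleGraph.Walk.length_concat, hw]⟩

lemma walk_v_sub_aux (e : EdgeIdx G) (hr : 2 ≤ r) (m : ℕ) (hm : m ≤ 2 * r - 2) :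
    ∃ w : (GPrime G r).Walk (inl e.1.2)
      (inr (inl (e, ⟨2 * r - 2 - m, Nat.lt_of_le_of_lt (Nat.sub_le _ _) (by omega)⟩))),
      w.length = m + 1 := by
  induction m with
  | zero =>
    refine ⟨(SimpleGraph.Walk.cons ((gp_adj_elast e (by omega)).symm)
      SimpleGraph.Walk.nil).copy rfl (sub_eq e (by omega) (by omega)), by simp⟩
  | succ n ih =>
    obtain ⟨w, hw⟩ := ih (by omega)
    have h1 : 2 * r - 2 - (n + 1) + 1 < 2 * r - 1 := by omega
    have hadj := (gp_adj_path e (2 * r - 2 - (n + 1)) h1).symm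
    have h2 : 2 * r - 2 - (n + 1) + 1 = 2 * r - 2 - n := by omega
    have hc := sub_eq (r := r) e h2 h1
    refine ⟨(w.copy rfl hc.symm).concat hadj, ?_⟩
    rw [SimpleGraph.Walk.length_concat, SimpleGraph.Walk.length_copy, hw]

lemma walk_v_sub (e : EdgeIdx G) (hr : 2 ≤ r) (i : ℕ) (hi : i < 2 * r - 1) :
    ∃ w : (GPrime G r).Walk (inl e.1.2) (inr (inl (e, ⟨i, hi⟩))),
      w.length = 2 * r - 1 - i := by
  obtain ⟨w, hw⟩ := walk_v_sub_aux e hr (2 * r - 2 - i) (by omega)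
  have h2 : 2 * r - 2 - (2 * r - 2 - i) = i := by omega
  have he := sub_eq (r := r) e h2 (Nat.lt_of_le_of_lt (Nat.sub_le _ _) (by omega))
  refine ⟨w.copy rfl (he.trans (by rfl)), ?_⟩
  rw [SimpleGraph.Walk.length_copy, hw]
  omega

def psiA (G : SimpleGraph V) (r : ℕ) [LinearOrder V] : VPrime G r → ℕ
  | Sum.inr (Sum.inr k) => r - (k : ℕ)
  | _ => r + 1

def psiB (G : SimpleGraph V) (r : ℕ) [LinearOrder V] (e : EdgeIdx G) : VPrime G r → ℕ
  | Sum.inl w => if w = e.1.1 ∨ w = e.1.2 then r else r + 2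
  | Sum.inr (Sum.inl (f, j)) =>
      if f = e then max ((j : ℕ) - (r - 1)) ((r - 1) - (j : ℕ))
      else min ((if f.1.1 = e.1.1 ∨ f.1.1 = e.1.2 then r else r + 2) + (j : ℕ) + 1)
               ((if f.1.2 = e.1.1 ∨ f.1.2 = e.1.2 then r else r + 2) + (2 * r - 1 - (j : ℕ)))
  | Sum.inr (Sum.inr k) => r + 1 + (k : ℕ)

lemma lip_walk {ψ : VPrime G r → ℕ}
    (h : ∀ a b, relPrime G r a b → ψ a ≤ ψ b + 1 ∧ ψ b ≤ ψ a + 1)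
    {a b : VPrime G r} (w : (GPrime G r).Walk a b) : ψ a ≤ ψ b + w.length := by
  induction w with
  | nil => simp
  | cons hadj p ih =>
    rw [GPrime, SimpleGraph.fromRel_adj] at hadj
    rcases hadj.2 with h' | h'
    · have h2 := (h _ _ h').1
      simp only [SimpleGraph.Walk.length_cons]; omega
    · have h2 := (h _ _ h').2
      simp only [SimpleGraph.Walk.length_cons]; omega

lemma psiA_lip (hr : 2 ≤ r) :
    ∀ a b, relPrime G r a b → psiA G r a ≤ psiA G r b + 1 ∧ psiA G r b ≤ psiA G r a + 1 := by
  rintro a b (⟨e, i, hi, rfl, rfl⟩ | ⟨e, i, j, hj, rfl, rfl⟩ | ⟨e, i, hi, rfl, rfl⟩ |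
    ⟨w, rfl, rfl⟩ | ⟨k, k', hk, rfl, rfl⟩) <;>
    simp only [psiA, Fin.val_zero]
  · omega
  · omega
  · omega
  · omega
  · have h1 := k.isLt; have h2 := k'.isLt; omega

lemma psiB_lip (hr : 2 ≤ r) (e : EdgeIdx G) :
    ∀ a b, relPrime G r a b →
      psiB G r e a ≤ psiB G r e b + 1 ∧ psiB G r e b ≤ psiB G r e a + 1 := by
  rintro a b (⟨f, i, hi, rfl, rfl⟩ | ⟨f, i, j, hj, rfl, rfl⟩ | ⟨f, i, hi, rfl, rfl⟩ |
    ⟨w, rfl, rfl⟩ | ⟨k, k', hk, rfl, rfl⟩)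
  · have hiLt := i.isLt
    by_cases hf : f = e
    · subst hf
      simp only [psiB, hi, eq_self_iff_true, true_or, or_true, if_true]
      omega
    · simp only [psiB, if_neg hf]
      split_ifs <;> omega
  · have hiLt := i.isLt; have hjLt := j.isLt
    by_cases hf : f = e
    · subst hf
      simp only [psiB, eq_self_iff_true, if_true]
      omega
    · simp only [psiB, if_neg hf]
      split_ifs <;> omega
  · have hiLt := i.isLt
    by_cases hf : f = e
    · subst hf
      simp only [psiB, hi, eq_self_iff_true, true_or, or_true, if_true]
      omega
    · simp only [psiB, if_neg hf]
      split_ifs <;> omega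
  · simp only [psiB, xVert, Fin.val_zero]
    split_ifs <;> omega
  · have h1 := k.isLt; have h2 := k'.isLt
    simp only [psiB]
    omega

lemma dom_of_walk {u v : VPrime G r} {D : Set (VPrime G r)} (hu : u ∈ D)
    (w : (GPrime G r).Walk u v) (hw : w.length ≤ r) :
    ∃ u' ∈ D, (GPrime G r).Reachable u' v ∧ (GPrime G r).dist u' v ≤ r :=
  ⟨u, hu, ⟨w⟩, le_trans (SimpleGraph.dist_le w) hw⟩

lemma pend_dom (hr : 2 ≤ r) {D : Set (VPrime G r)} (hD : IsDrDS (GPrime G r) r D) :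
    ∃ k : Fin (r + 1), Sum.inr (Sum.inr k) ∈ D := by
  obtain ⟨d, hdD, hre, hdist⟩ := hD (Sum.inr (Sum.inr ⟨r, by omega⟩))
  obtain ⟨p, hp⟩ := hre.exists_walk_length_eq_dist
  have hlip := lip_walk (psiA_lip hr) p
  rw [hp] at hlip
  have h0 : psiA G r (Sum.inr (Sum.inr (⟨r, by omega⟩ : Fin (r + 1)))) = 0 := by
    simp [psiA]
  have hψ : psiA G r d ≤ r := by omega
  rcases d with w | ⟨f, j⟩ | k
  · have h1 : psiA G r (Sum.inl w) = r + 1 := rfl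
    omega
  · have h1 : psiA G r (Sum.inr (Sum.inl (f, j))) = r + 1 := rfl
    omega
  · exact ⟨k, hdD⟩

lemma mid_dom (hr : 2 ≤ r) {D : Set (VPrime G r)} (hD : IsDrDS (GPrime G r) r D)
    (e : EdgeIdx G) :
    Sum.inl e.1.1 ∈ D ∨ Sum.inl e.1.2 ∈ D ∨ ∃ j, Sum.inr (Sum.inl (e, j)) ∈ D := by
  obtain ⟨d, hdD, hre, hdist⟩ := hD (Sum.inr (Sum.inl (e, ⟨r - 1, by omega⟩)))
  obtain ⟨p, hp⟩ := hre.exists_walk_length_eq_dist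
  have hlip := lip_walk (psiB_lip hr e) p
  rw [hp] at hlip
  have h0 : psiB G r e (Sum.inr (Sum.inl (e, ⟨r - 1, by omega⟩))) = 0 := by
    simp [psiB]
  have hψ : psiB G r e d ≤ r := by omega
  rcases d with w | ⟨f, j⟩ | k
  · have h1 : psiB G r e (Sum.inl w) = if w = e.1.1 ∨ w = e.1.2 then r else r + 2 := rfl
    rw [h1] at hψ
    split_ifs at hψ with hw
    · rcases hw with rfl | rfl
      · exact Or.inl hdD
      · exact Or.inr (Or.inl hdD)
    · omega
  · by_cases hf : f = e
    · subst hf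
      exact Or.inr (Or.inr ⟨j, hdD⟩)
    · have hjl := j.isLt
      have h1 : psiB G r e (Sum.inr (Sum.inl (f, j))) =
          min ((if f.1.1 = e.1.1 ∨ f.1.1 = e.1.2 then r else r + 2) + (j : ℕ) + 1)
              ((if f.1.2 = e.1.1 ∨ f.1.2 = e.1.2 then r else r + 2) + (2 * r - 1 - (j : ℕ))) := by
        simp only [psiB, if_neg hf]
      rw [h1] at hψ
      split_ifs at hψ <;> omega
  · have h1 : psiB G r e (Sum.inr (Sum.inr k)) = r + 1 + (k : ℕ) := rfl
    omega

lemma cover_dominates (hr : 2 ≤ r) {C : Set V} (hC : IsVC G C) :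
    IsDrDS (GPrime G r) r (Sum.inl '' C ∪ {xVert G r}) := by
  intro v
  have hxmem : xVert G r ∈ Sum.inl '' C ∪ {xVert G r} := Or.inr rfl
  rcases v with w | ⟨e, i⟩ | k
  · exact dom_of_walk hxmem ((gp_adj_vx w hr).symm.toWalk) (by simp only [SimpleGraph.Adj.toWalk, SimpleGraph.Walk.length_cons, SimpleGraph.Walk.length_nil]; omega)
  · rcases i with ⟨iv, hlt⟩
    by_cases h1 : iv + 2 ≤ r
    · obtain ⟨p, hp⟩ := walk_u_sub e iv hlt
      refine dom_of_walk hxmem (SimpleGraph.Walk.cons (gp_adj_vx e.1.1 hr).symm p) ?_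
      rw [SimpleGraph.Walk.length_cons, hp]; omega
    · by_cases h2 : iv = r - 1
      · rcases hC e.1.1 e.1.2 e.2.1 with hc | hc
        · obtain ⟨p, hp⟩ := walk_u_sub e iv hlt
          exact dom_of_walk (Or.inl ⟨e.1.1, hc, rfl⟩) p (by rw [hp]; omega)
        · obtain ⟨p, hp⟩ := walk_v_sub e hr iv hlt
          exact dom_of_walk (Or.inl ⟨e.1.2, hc, rfl⟩) p (by rw [hp]; omega)
      · obtain ⟨p, hp⟩ := walk_v_sub e hr iv hlt
        refine dom_of_walk hxmem (SimpleGraph.Walk.cons (gp_adj_vx e.1.2 hr).symm p) ?_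
        rw [SimpleGraph.Walk.length_cons, hp]; omega
  · rcases k with ⟨kv, hlt⟩
    obtain ⟨p, hp⟩ := walk_x_pend (G := G) kv hlt
    exact dom_of_walk hxmem p (by rw [hp]; omega)

lemma lower_bound (hr : 2 ≤ r) {D : Set (VPrime G r)} (hD : IsDrDS (GPrime G r) r D) :
    tau G + 1 ≤ D.ncard := by
  classical
  obtain ⟨k0, hk0⟩ := pend_dom hr hD
  set C : Set V := {w | Sum.inl w ∈ D ∨
    ∃ f : EdgeIdx G, f.1.1 = w ∧ ∃ j, Sum.inr (Sum.inl (f, j)) ∈ D} with hCdef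
  have hCvc : IsVC G C := by
    intro u v huv
    rcases lt_trichotomy u v with h | h | h
    · rcases mid_dom hr hD ⟨(u, v), huv, h⟩ with h1 | h1 | ⟨j, h1⟩
      · exact Or.inl (Or.inl h1)
      · exact Or.inr (Or.inl h1)
      · exact Or.inl (Or.inr ⟨⟨(u, v), huv, h⟩, rfl, j, h1⟩)
    · exact absurd h (G.ne_of_adj huv)
    · rcases mid_dom hr hD ⟨(v, u), huv.symm, h⟩ with h1 | h1 | ⟨j, h1⟩
      · exact Or.inr (Or.inl h1)
      · exact Or.inl (Or.inl h1)
      · exact Or.inr (Or.inr ⟨⟨(v, u), huv.symm, h⟩, rfl, j, h1⟩)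
  have hfin : D.Finite := Set.toFinite D
  set T : Set (VPrime G r) :=
    {d | (∃ w, d = Sum.inl w) ∨ ∃ p, d = Sum.inr (Sum.inl p)} with hTdef
  have hfinT : (D ∩ T).Finite := hfin.inter_of_left T
  set g : VPrime G r → Option V := fun d => match d with
    | Sum.inl w => some w
    | Sum.inr (Sum.inl (f, _)) => some f.1.1
    | Sum.inr (Sum.inr _) => none with hgdef
  have hsub : Option.some '' C ⊆ g '' (D ∩ T) := by
    rintro _ ⟨w, hw, rfl⟩
    rcases hw with h1 | ⟨f, hf1, j, h1⟩
    · exact ⟨Sum.inl w, ⟨h1, Or.inl ⟨w, rfl⟩⟩, rfl⟩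
    · exact ⟨Sum.inr (Sum.inl (f, j)), ⟨h1, Or.inr ⟨(f, j), rfl⟩⟩, by simp [hgdef, hf1]⟩
  have h1 : C.ncard ≤ (D ∩ T).ncard := by
    calc C.ncard = (Option.some '' C).ncard :=
          (Set.ncard_image_of_injective _ (Option.some_injective V)).symm
      _ ≤ (g '' (D ∩ T)).ncard := Set.ncard_le_ncard hsub (hfinT.image g)
      _ ≤ (D ∩ T).ncard := Set.ncard_image_le hfinT
  have h2 : (D ∩ T).ncard + 1 ≤ D.ncard := by
    have hnot : (Sum.inr (Sum.inr k0) : VPrime G r) ∉ D ∩ T := by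
      rintro ⟨-, (⟨w, hw⟩ | ⟨q, hq⟩)⟩
      · simp at hw
      · simp at hq
    have hins : insert (Sum.inr (Sum.inr k0) : VPrime G r) (D ∩ T) ⊆ D := by
      rintro d (rfl | ⟨hd, -⟩)
      · exact hk0
      · exact hd
    calc (D ∩ T).ncard + 1
        = (insert (Sum.inr (Sum.inr k0) : VPrime G r) (D ∩ T)).ncard :=
          (Set.ncard_insert_of_notMem hnot hfinT).symm
      _ ≤ D.ncard := Set.ncard_le_ncard hins hfin
  have h3 : tau G ≤ C.ncard := Nat.sInf_le ⟨C, hCvc, rfl⟩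
  omega

end Aux

theorem stmt17 {V : Type*} [Fintype V] [LinearOrder V] (G : SimpleGraph V)
    (r : ℕ) (hr : 2 ≤ r) :
    gammaR (GPrime G r) r = tau G + 1 ∧
    ∀ C : Set V, IsVC G C → C.ncard = tau G →
      IsDrDS (GPrime G r) r (Sum.inl '' C ∪ {xVert G r}) ∧
      (Sum.inl '' C ∪ {xVert G r}).ncard = gammaR (GPrime G r) r := by
  classical
  have hvcne : {n | ∃ C : Set V, IsVC G C ∧ C.ncard = n}.Nonempty :=
    ⟨(Set.univ : Set V).ncard, Set.univ, fun u v _ => Or.inl (Set.mem_univ u), rfl⟩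
  obtain ⟨C0, hC0, hC0card⟩ : ∃ C : Set V, IsVC G C ∧ C.ncard = tau G :=
    Nat.sInf_mem hvcne
  have hD0 : IsDrDS (GPrime G r) r (Sum.inl '' C0 ∪ {xVert G r}) := cover_dominates hr hC0
  have hcard : ∀ C : Set V, (Sum.inl '' C ∪ {xVert G r} : Set (VPrime G r)).ncard
      = C.ncard + 1 := by
    intro C
    rw [Set.union_singleton,
      Set.ncard_insert_of_notMem (by rintro ⟨w, -, h⟩; simp [xVert] at h) (Set.toFinite _),
      Set.ncard_image_of_injective _ Sum.inl_injective]
  have hgne : {n | ∃ D : Set (VPrime G r), IsDrDS (GPrime G r) r D ∧ D.ncard = n}.Nonempty :=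
    ⟨_, _, hD0, rfl⟩
  obtain ⟨Dm, hDm, hDmcard⟩ :
      ∃ D : Set (VPrime G r), IsDrDS (GPrime G r) r D ∧ D.ncard = gammaR (GPrime G r) r :=
    Nat.sInf_mem hgne
  have hup : gammaR (GPrime G r) r ≤ tau G + 1 := by
    have h := Nat.sInf_le (show (Sum.inl '' C0 ∪ {xVert G r} : Set (VPrime G r)).ncard ∈
      {n | ∃ D : Set (VPrime G r), IsDrDS (GPrime G r) r D ∧ D.ncard = n} from ⟨_, hD0, rfl⟩)
    rw [hcard C0, hC0card] at h
    exact h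
  have hlo : tau G + 1 ≤ gammaR (GPrime G r) r := hDmcard ▸ lower_bound hr hDm
  have heq : gammaR (GPrime G r) r = tau G + 1 := le_antisymm hup hlo
  refine ⟨heq, fun C hC hCc => ⟨cover_dominates hr hC, ?_⟩⟩
  rw [hcard C, hCc, heq]
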